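/- Let σ > 0, L > 0, β ∈ ℝ, Ω ∈ ℝ, and let χ(τ) = π^(−1/4) σ^(−1/2) e^(−τ²/(2σ²)). Then lim_{ε→0⁺} ∫∫ χ(τ)χ(τ') e^(−iΩ(τ−τ')) · [ −1 / ( 2L² sin(π(e^β(τ−τ') − iε)/L) sin(π(e^(−β)(τ−τ') − iε)/L) ) ] dτ dτ' = (4 π^(1/2) σ / L²) Σ_{n,m=0}^∞ exp[ −σ² ( Ω + (2π/L)( (n+½) e^β + (m+½) e^(−β) ) )² ], and the series on the right converges. -/

import Mathlib

open MeasureTheory Filter Complex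
open scoped Topology Real

set_option maxHeartbeats 1000000



lemma aux_sin_ne {z : ℂ} (hz : z.im < 0) : Complex.sin z ≠ 0 := by
  intro h
  rw [Complex.sin_eq_zero_iff] at h
  obtain ⟨k, rfl⟩ := h
  simp at hz

lemma aux_norm_term (z : ℂ) (n : ℕ) :
    ‖2 * Complex.I * Complex.exp (-Complex.I * (2 * n + 1) * z)‖
      = 2 * Real.exp z.im * (Real.exp (2 * z.im)) ^ n := by
  have h : -Complex.I * (2 * n + 1) * z = ((2 * n + 1 : ℝ) : ℂ) * (-Complex.I * z) := by
    push_cast; ring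
  rw [h, norm_mul, norm_mul, Complex.norm_two, Complex.norm_I, Complex.norm_exp, mul_one]
  have hre : (((2 * n + 1 : ℝ) : ℂ) * (-Complex.I * z)).re = (2 * n + 1) * z.im := by
    simp [Complex.mul_re]
  rw [hre, show (2 * (n:ℝ) + 1) * z.im = z.im + n * (2 * z.im) by ring, Real.exp_add,
    Real.exp_nat_mul]
  ring

lemma aux_summable_norm {z : ℂ} (hz : z.im < 0) :
    Summable fun n : ℕ => ‖2 * Complex.I * Complex.exp (-Complex.I * (2 * n + 1) * z)‖ := by
  simp only [aux_norm_term]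
  exact (summable_geometric_of_lt_one (Real.exp_nonneg _)
    (Real.exp_lt_one_iff.2 (by linarith))).mul_left _

lemma aux_hasSum_inv_sin {z : ℂ} (hz : z.im < 0) :
    HasSum (fun n : ℕ => 2 * Complex.I * Complex.exp (-Complex.I * (2 * n + 1) * z))
      (Complex.sin z)⁻¹ := by
  set r : ℂ := Complex.exp (-2 * Complex.I * z) with hr
  have hnr : ‖r‖ < 1 := by
    rw [hr, Complex.norm_exp]
    refine Real.exp_lt_one_iff.2 ?_
    have : (-2 * Complex.I * z).re = 2 * z.im := by simp [Complex.mul_re]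
    rw [this]; linarith
  have h1r : (1 : ℂ) - r ≠ 0 := by
    intro h
    rw [sub_eq_zero] at h
    rw [← h] at hnr
    simp at hnr
  have hgeo := (hasSum_geometric_of_norm_lt_one hnr).mul_left
    (2 * Complex.I * Complex.exp (-Complex.I * z))
  have hterm : ∀ n : ℕ, 2 * Complex.I * Complex.exp (-Complex.I * z) * r ^ n
      = 2 * Complex.I * Complex.exp (-Complex.I * (2 * n + 1) * z) := by
    intro n
    rw [hr, ← Complex.exp_nat_mul, mul_assoc _ (Complex.exp _), ← Complex.exp_add]
    congr 2
    push_cast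
    ring
  simp only [hterm] at hgeo
  have e1 : Complex.exp (-z * Complex.I) * Complex.exp (-Complex.I * z)
      = Complex.exp (-2 * Complex.I * z) := by rw [← Complex.exp_add]; congr 1; ring
  have e2 : Complex.exp (z * Complex.I) * Complex.exp (-Complex.I * z) = 1 := by
    rw [← Complex.exp_add, show z * Complex.I + -Complex.I * z = 0 by ring, Complex.exp_zero]
  have key : Complex.sin z * (2 * Complex.I * Complex.exp (-Complex.I * z)) = 1 - r := by
    calc Complex.sin z * (2 * Complex.I * Complex.exp (-Complex.I * z))
        = (Complex.exp (-z * Complex.I) * Complex.exp (-Complex.I * z)) * (Complex.I * Complex.I)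
          - (Complex.exp (z * Complex.I) * Complex.exp (-Complex.I * z))
            * (Complex.I * Complex.I) := by rw [Complex.sin]; ring
      _ = 1 - r := by rw [e1, e2, Complex.I_mul_I, hr]; ring
  have hval : 2 * Complex.I * Complex.exp (-Complex.I * z) * (1 - r)⁻¹
      = (Complex.sin z)⁻¹ :=
    (inv_eq_of_mul_eq_one_right (by rw [← mul_assoc, key, mul_inv_cancel₀ h1r])).symm
  exact hval ▸ hgeo


noncomputable def gfun (σ u t : ℝ) : ℂ :=
  ((Real.exp (-t ^ 2 / (2 * σ ^ 2)) : ℝ) : ℂ) * Complex.exp (Complex.I * u * t)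

lemma gfun_eq_cexp (σ u t : ℝ) :
    gfun σ u t = Complex.exp ((-(1 / (2 * (σ:ℂ) ^ 2))) * t ^ 2 + (Complex.I * u) * t + 0) := by
  rw [gfun, Complex.ofReal_exp, ← Complex.exp_add]
  congr 1
  push_cast
  ring

lemma gfun_integrable {σ : ℝ} (hσ : 0 < σ) (u : ℝ) : Integrable (gfun σ u) := by
  have hb : (-(1 / (2 * (σ:ℂ) ^ 2))).re < 0 := by
    have : (-(1 / (2 * (σ:ℂ) ^ 2))) = ((-(1 / (2 * σ ^ 2)) : ℝ) : ℂ) := by push_cast; ring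
    rw [this, Complex.ofReal_re]
    have : (0:ℝ) < 1 / (2 * σ ^ 2) := by positivity
    linarith
  simpa only [← gfun_eq_cexp] using integrable_cexp_quadratic' hb (Complex.I * u) 0

lemma gfun_norm (σ u t : ℝ) : ‖gfun σ u t‖ = Real.exp (-t ^ 2 / (2 * σ ^ 2)) := by
  rw [gfun, norm_mul, Complex.norm_real, Real.norm_eq_abs,
    _root_.abs_of_nonneg (Real.exp_nonneg _), Complex.norm_exp]
  have : (Complex.I * u * t).re = 0 := by simp [Complex.mul_re]
  rw [this, Real.exp_zero, mul_one]

lemma gfun_integral_norm {σ : ℝ} (hσ : 0 < σ) (u : ℝ) :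
    ∫ t : ℝ, ‖gfun σ u t‖ = Real.sqrt (2 * Real.pi * σ ^ 2) := by
  simp only [gfun_norm]
  have h : ∀ t : ℝ, -t ^ 2 / (2 * σ ^ 2) = -(1 / (2 * σ ^ 2)) * t ^ 2 := by
    intro t; field_simp
  simp only [h]
  rw [integral_gaussian]
  congr 1
  rw [div_div_eq_mul_div, div_one]
  ring

lemma gfun_integral {σ : ℝ} (hσ : 0 < σ) (u : ℝ) :
    ∫ t : ℝ, gfun σ u t
      = ((Real.sqrt (2 * Real.pi * σ ^ 2) * Real.exp (-σ ^ 2 * u ^ 2 / 2) : ℝ) : ℂ) := by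
  have hσ' : (σ : ℂ) ≠ 0 := Complex.ofReal_ne_zero.2 hσ.ne'
  have hb : (-(1 / (2 * (σ:ℂ) ^ 2))).re < 0 := by
    have : (-(1 / (2 * (σ:ℂ) ^ 2))) = ((-(1 / (2 * σ ^ 2)) : ℝ) : ℂ) := by push_cast; ring
    rw [this, Complex.ofReal_re]
    have : (0:ℝ) < 1 / (2 * σ ^ 2) := by positivity
    linarith
  simp only [gfun_eq_cexp]
  rw [integral_cexp_quadratic hb]
  have h1 : ((Real.pi : ℂ) / -(-(1 / (2 * (σ:ℂ) ^ 2)))) = ((2 * Real.pi * σ ^ 2 : ℝ) : ℂ) := by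
    push_cast
    field_simp
  have h2 : ((2 * Real.pi * σ ^ 2 : ℝ) : ℂ) ^ (1 / 2 : ℂ)
      = ((Real.sqrt (2 * Real.pi * σ ^ 2) : ℝ) : ℂ) := by
    have hx : (0:ℝ) ≤ 2 * Real.pi * σ ^ 2 := by positivity
    rw [show (1/2 : ℂ) = ((1/2 : ℝ) : ℂ) by norm_num, ← Complex.ofReal_cpow hx,
      ← Real.sqrt_eq_rpow]
  have h3 : (0 : ℂ) - (Complex.I * u) ^ 2 / (4 * (-(1 / (2 * (σ:ℂ) ^ 2))))
      = ((-σ ^ 2 * u ^ 2 / 2 : ℝ) : ℂ) := by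
    rw [mul_pow, Complex.I_sq]
    push_cast
    field_simp
    ring
  rw [h1, h2, h3, ← Complex.ofReal_exp, ← Complex.ofReal_mul]


lemma aux_summable_E {q : ℝ} (hq : 0 < q) :
    Summable fun p : ℕ × ℕ => Real.exp (-q * ((p.1 : ℝ) + (p.2 : ℝ) + 1)) := by
  have h : ∀ p : ℕ × ℕ, Real.exp (-q * ((p.1 : ℝ) + (p.2 : ℝ) + 1))
      = Real.exp (-q) * (Real.exp (-q) ^ p.1 * Real.exp (-q) ^ p.2) := by
    intro p
    rw [← Real.exp_nat_mul, ← Real.exp_nat_mul, ← Real.exp_add, ← Real.exp_add]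
    congr 1
    push_cast
    ring
  simp only [h]
  have hgeo : Summable fun n : ℕ => Real.exp (-q) ^ n :=
    summable_geometric_of_lt_one (Real.exp_nonneg _)
      (Real.exp_lt_one_iff.2 (by linarith))
  exact (Summable.mul_of_nonneg hgeo hgeo (fun n => pow_nonneg (Real.exp_nonneg _) n)
    (fun n => pow_nonneg (Real.exp_nonneg _) n)).mul_left _

lemma aux_summable_S {σ d Ω : ℝ} (hσ : 0 < σ) (hd : 0 < d) (u : ℕ × ℕ → ℝ)
    (hu : ∀ p : ℕ × ℕ, d * ((p.1 : ℝ) + (p.2 : ℝ) + 1) ≤ u p + |Ω|) :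
    Summable fun p : ℕ × ℕ => Real.exp (-σ ^ 2 * (u p) ^ 2) := by
  set c : ℝ := σ ^ 2 * d ^ 2 / 2 with hc_def
  have hc : 0 < c := by positivity
  refine Summable.of_nonneg_of_le (fun p => Real.exp_nonneg _)
    (fun p => ?_) (((aux_summable_E hc).mul_left (Real.exp (σ ^ 2 * Ω ^ 2))))
  rw [← Real.exp_add]
  refine Real.exp_le_exp.2 ?_
  set s : ℝ := (p.1 : ℝ) + (p.2 : ℝ) + 1 with hs_def
  have hs1 : (1 : ℝ) ≤ s := by
    have := Nat.cast_nonneg (α := ℝ) p.1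
    have := Nat.cast_nonneg (α := ℝ) p.2
    simp only [hs_def]; linarith
  have h1 : d * s ≤ u p + |Ω| := hu p
  have h2 : (0 : ℝ) ≤ d * s := by positivity
  have h4 : d ^ 2 * s ^ 2 ≤ 2 * (u p) ^ 2 + 2 * Ω ^ 2 := by
    nlinarith [sq_nonneg (u p - |Ω|), _root_.sq_abs Ω, mul_self_le_mul_self h2 h1]
  have h3 : s ≤ s ^ 2 := by nlinarith
  have h5 : d ^ 2 * s ≤ d ^ 2 * s ^ 2 := by nlinarith [sq_nonneg d]
  nlinarith [mul_le_mul_of_nonneg_left (h5.trans h4) (sq_nonneg σ)]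


lemma aux_const {σ L : ℝ} (hσ : 0 < σ) (hL : 0 < L) :
    2 / L ^ 2 * (Real.pi ^ (-(1:ℝ)/4) * σ ^ (-(1:ℝ)/2)) ^ 2 * (2 * Real.pi * σ ^ 2)
      = 4 * Real.sqrt Real.pi * σ / L ^ 2 := by
  have hπ := Real.pi_pos
  have h1 : (Real.pi ^ (-(1:ℝ)/4)) ^ 2 = Real.pi ^ (-(1:ℝ)/2) := by
    rw [sq, ← Real.rpow_add hπ]
    norm_num
  have h2 : (σ ^ (-(1:ℝ)/2)) ^ 2 = σ⁻¹ := by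
    rw [sq, ← Real.rpow_add hσ]
    norm_num
    exact Real.rpow_neg_one σ
  have h3 : Real.pi ^ (-(1:ℝ)/2) = (Real.sqrt Real.pi)⁻¹ := by
    rw [show (-(1:ℝ)/2) = -(1/2 : ℝ) by norm_num, Real.rpow_neg hπ.le, Real.sqrt_eq_rpow]
  have hsq : Real.sqrt Real.pi * Real.sqrt Real.pi = Real.pi :=
    Real.mul_self_sqrt hπ.le
  have hs0 : Real.sqrt Real.pi ≠ 0 := by positivity
  rw [mul_pow, h1, h2, h3]
  field_simp
  linear_combination (-4) * hsq

lemma aux_im (L ε c t t' : ℝ) (hL : 0 < L) (hε : 0 < ε) :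
    ((Real.pi : ℂ) * ((c : ℂ) * ((t : ℂ) - (t' : ℂ)) - Complex.I * ε) / L).im
      = -(Real.pi * ε / L) := by
  have h : (Real.pi : ℂ) * ((c : ℂ) * ((t : ℂ) - (t' : ℂ)) - Complex.I * ε) / L
      = ((Real.pi * (c * (t - t')) / L : ℝ) : ℂ) + ((-(Real.pi * ε / L) : ℝ) : ℂ) * Complex.I := by
    push_cast
    field_simp
    ring
  rw [h]
  simp

lemma aux_im_neg {L ε : ℝ} (c t t' : ℝ) (hL : 0 < L) (hε : 0 < ε) :
    (((Real.pi : ℂ) * ((c : ℂ) * ((t : ℂ) - (t' : ℂ)) - Complex.I * ε) / L)).im < 0 := by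
  rw [aux_im L ε c t t' hL hε]
  have : 0 < Real.pi * ε / L := by positivity
  linarith

noncomputable def modeU (L Ω a b : ℝ) (p : ℕ × ℕ) : ℝ :=
  Ω + (2 * Real.pi / L) * (((p.1 : ℝ) + 1 / 2) * a + ((p.2 : ℝ) + 1 / 2) * b)

noncomputable def modeE (L ε : ℝ) (p : ℕ × ℕ) : ℝ :=
  Real.exp (-(2 * Real.pi * ε / L) * ((p.1 : ℝ) + (p.2 : ℝ) + 1))

noncomputable def modeC (σ L ε : ℝ) (p : ℕ × ℕ) : ℝ :=
  2 / L ^ 2 * (Real.pi ^ (-(1 : ℝ) / 4) * σ ^ (-(1 : ℝ) / 2)) ^ 2 * modeE L ε p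

noncomputable def modeG (σ L Ω ε a b : ℝ) (p : ℕ × ℕ) (τ τ' : ℝ) : ℂ :=
  ((modeC σ L ε p : ℝ) : ℂ) * gfun σ (-(modeU L Ω a b p)) τ * gfun σ (modeU L Ω a b p) τ'

lemma modeE_pos (L ε : ℝ) (p : ℕ × ℕ) : 0 < modeE L ε p := Real.exp_pos _

lemma modeC_pos {σ L : ℝ} (hσ : 0 < σ) (hL : 0 < L) (ε : ℝ) (p : ℕ × ℕ) :
    0 < modeC σ L ε p := by
  have := modeE_pos L ε p
  rw [modeC]
  positivity

lemma modeE_le_one {L ε : ℝ} (hL : 0 < L) (hε : 0 ≤ ε) (p : ℕ × ℕ) : modeE L ε p ≤ 1 := by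
  rw [modeE]
  refine Real.exp_le_one_iff.2 ?_
  have h1 : (0:ℝ) ≤ (p.1 : ℝ) + (p.2 : ℝ) + 1 := by positivity
  have h2 : (0:ℝ) ≤ 2 * Real.pi * ε / L := by positivity
  nlinarith

lemma aux_summable_modeC {σ L : ℝ} (hσ : 0 < σ) (hL : 0 < L) {ε : ℝ} (hε : 0 < ε) :
    Summable (modeC σ L ε) := by
  have hq : 0 < 2 * Real.pi * ε / L := by positivity
  exact ((aux_summable_E hq).mul_left _)
lemma aux_pointwise (σ L Ω ε a b : ℝ) (hσ : 0 < σ) (hL : 0 < L) (hε : 0 < ε) (τ τ' : ℝ) :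
    ((Real.pi ^ (-(1 : ℝ) / 4) * σ ^ (-(1 : ℝ) / 2) * Real.exp (-τ ^ 2 / (2 * σ ^ 2))
        * (Real.pi ^ (-(1 : ℝ) / 4) * σ ^ (-(1 : ℝ) / 2)
          * Real.exp (-τ' ^ 2 / (2 * σ ^ 2))) : ℝ) : ℂ)
      * Complex.exp (-Complex.I * Ω * ((τ : ℂ) - τ')) *
      (-1 / (2 * (L : ℂ) ^ 2
        * Complex.sin ((Real.pi : ℂ) * ((a : ℂ) * ((τ : ℂ) - τ') - Complex.I * ε) / L)
        * Complex.sin ((Real.pi : ℂ) * ((b : ℂ) * ((τ : ℂ) - τ') - Complex.I * ε) / L)))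
    = ∑' p : ℕ × ℕ, modeG σ L Ω ε a b p τ τ' := by
  have him1 := aux_im_neg (L := L) (ε := ε) a τ τ' hL hε
  have him2 := aux_im_neg (L := L) (ε := ε) b τ τ' hL hε
  obtain ⟨z1, hz1⟩ : ∃ z : ℂ,
      (Real.pi : ℂ) * ((a : ℂ) * ((τ : ℂ) - τ') - Complex.I * ε) / L = z := ⟨_, rfl⟩
  obtain ⟨z2, hz2⟩ : ∃ z : ℂ,
      (Real.pi : ℂ) * ((b : ℂ) * ((τ : ℂ) - τ') - Complex.I * ε) / L = z := ⟨_, rfl⟩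
  rw [hz1] at him1
  rw [hz2] at him2
  rw [hz1, hz2]
  have h1 := aux_hasSum_inv_sin him1
  have h2 := aux_hasSum_inv_sin him2
  have hs1 := aux_sin_ne him1
  have hs2 := aux_sin_ne him2
  have hL0 : (L : ℂ) ≠ 0 := Complex.ofReal_ne_zero.2 hL.ne'
  obtain ⟨c0, hc0⟩ : ∃ z : ℂ,
      ((Real.pi ^ (-(1 : ℝ) / 4) * σ ^ (-(1 : ℝ) / 2) * Real.exp (-τ ^ 2 / (2 * σ ^ 2))
        * (Real.pi ^ (-(1 : ℝ) / 4) * σ ^ (-(1 : ℝ) / 2)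
          * Real.exp (-τ' ^ 2 / (2 * σ ^ 2))) : ℝ) : ℂ)
      * Complex.exp (-Complex.I * Ω * ((τ : ℂ) - τ')) * (-1 / (2 * (L : ℂ) ^ 2)) = z := ⟨_, rfl⟩
  have hn1 := aux_summable_norm him1
  have hn2 := aux_summable_norm him2
  have hsumprod := summable_mul_of_summable_norm (R := ℂ) hn1 hn2
  have hfull := (h1.mul h2 hsumprod).mul_left c0
  have hterm : ∀ p : ℕ × ℕ,
      c0 * ((2 * Complex.I * Complex.exp (-Complex.I * (2 * p.1 + 1) * z1))
        * (2 * Complex.I * Complex.exp (-Complex.I * (2 * p.2 + 1) * z2)))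
      = modeG σ L Ω ε a b p τ τ' := by
    rintro ⟨n, m⟩
    have key : Complex.exp (-Complex.I * Ω * ((τ : ℂ) - τ')) *
        (Complex.exp (-Complex.I * (2 * n + 1) * z1)
          * Complex.exp (-Complex.I * (2 * m + 1) * z2))
        = ((modeE L ε (n, m) : ℝ) : ℂ)
          * (Complex.exp (Complex.I * ((-(modeU L Ω a b (n, m)) : ℝ) : ℂ) * τ)
            * Complex.exp (Complex.I * ((modeU L Ω a b (n, m) : ℝ) : ℂ) * τ')) := by
      rw [← hz1, ← hz2, ← Complex.exp_add, ← Complex.exp_add, modeE, Complex.ofReal_exp,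
        ← Complex.exp_add, ← Complex.exp_add, modeU]
      congr 1
      push_cast
      have hLC : (L : ℂ) ≠ 0 := Complex.ofReal_ne_zero.2 hL.ne'
      field_simp
      ring_nf
      linear_combination (2 * (Real.pi : ℂ) * ε * ((n : ℂ) + m + 1))
        * Complex.I_sq
    have h2I : (2 * Complex.I) * (2 * Complex.I) = (-4 : ℂ) := by
      rw [mul_mul_mul_comm, Complex.I_mul_I]
      norm_num
    calc c0 * ((2 * Complex.I * Complex.exp (-Complex.I * (2 * n + 1) * z1))
          * (2 * Complex.I * Complex.exp (-Complex.I * (2 * m + 1) * z2)))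
        = ((Real.pi ^ (-(1 : ℝ) / 4) * σ ^ (-(1 : ℝ) / 2) * Real.exp (-τ ^ 2 / (2 * σ ^ 2))
            * (Real.pi ^ (-(1 : ℝ) / 4) * σ ^ (-(1 : ℝ) / 2)
              * Real.exp (-τ' ^ 2 / (2 * σ ^ 2))) : ℝ) : ℂ)
          * (-1 / (2 * (L : ℂ) ^ 2)) * ((2 * Complex.I) * (2 * Complex.I))
          * (Complex.exp (-Complex.I * Ω * ((τ : ℂ) - τ'))
            * (Complex.exp (-Complex.I * (2 * n + 1) * z1)
              * Complex.exp (-Complex.I * (2 * m + 1) * z2))) := by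
          rw [← hc0]; ring
      _ = ((Real.pi ^ (-(1 : ℝ) / 4) * σ ^ (-(1 : ℝ) / 2) * Real.exp (-τ ^ 2 / (2 * σ ^ 2))
            * (Real.pi ^ (-(1 : ℝ) / 4) * σ ^ (-(1 : ℝ) / 2)
              * Real.exp (-τ' ^ 2 / (2 * σ ^ 2))) : ℝ) : ℂ)
          * (-1 / (2 * (L : ℂ) ^ 2)) * (-4 : ℂ)
          * (((modeE L ε (n, m) : ℝ) : ℂ)
            * (Complex.exp (Complex.I * ((-(modeU L Ω a b (n, m)) : ℝ) : ℂ) * τ)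
              * Complex.exp (Complex.I * ((modeU L Ω a b (n, m) : ℝ) : ℂ) * τ'))) := by
          rw [key, h2I]
      _ = modeG σ L Ω ε a b (n, m) τ τ' := by
          rw [modeG, modeC, gfun, gfun]
          push_cast
          ring
  have hfe : (fun p : ℕ × ℕ =>
      c0 * ((2 * Complex.I * Complex.exp (-Complex.I * (2 * p.1 + 1) * z1))
        * (2 * Complex.I * Complex.exp (-Complex.I * (2 * p.2 + 1) * z2))))
      = fun p => modeG σ L Ω ε a b p τ τ' := funext hterm
  rw [hfe] at hfull
  have halg : ∀ w k s t : ℂ, s ≠ 0 → t ≠ 0 → k ≠ 0 →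
      w * (-1 / (k * s * t)) = w * (-1 / k) * (s⁻¹ * t⁻¹) := by
    intro w k s t hs ht hk
    field_simp
  rw [hfull.tsum_eq, ← hc0]
  exact halg _ _ _ _ hs1 hs2 (mul_ne_zero two_ne_zero (pow_ne_zero 2 hL0))

lemma modeG_integrable {σ : ℝ} (L Ω ε a b : ℝ) (hσ : 0 < σ) (p : ℕ × ℕ) (τ : ℝ) :
    Integrable (fun τ' => modeG σ L Ω ε a b p τ τ') := by
  unfold modeG
  exact (gfun_integrable hσ (modeU L Ω a b p)).const_mul _

lemma modeG_norm_integral {σ L : ℝ} (Ω ε a b : ℝ) (hσ : 0 < σ) (hL : 0 < L) (p : ℕ × ℕ)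
    (τ : ℝ) : (∫ τ' : ℝ, ‖modeG σ L Ω ε a b p τ τ'‖)
      = modeC σ L ε p * Real.exp (-τ ^ 2 / (2 * σ ^ 2)) * Real.sqrt (2 * Real.pi * σ ^ 2) := by
  have hpt : ∀ τ' : ℝ, ‖modeG σ L Ω ε a b p τ τ'‖
      = (modeC σ L ε p * Real.exp (-τ ^ 2 / (2 * σ ^ 2))) * ‖gfun σ (modeU L Ω a b p) τ'‖ := by
    intro τ'
    rw [modeG, norm_mul, norm_mul, Complex.norm_real, Real.norm_eq_abs,
      _root_.abs_of_pos (modeC_pos hσ hL ε p), gfun_norm]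
  simp only [hpt]
  rw [integral_const_mul, gfun_integral_norm hσ, mul_assoc]

noncomputable def modeW (σ L Ω ε a b : ℝ) (p : ℕ × ℕ) : ℝ :=
  modeC σ L ε p * (Real.sqrt (2 * Real.pi * σ ^ 2)
    * Real.exp (-σ ^ 2 * (modeU L Ω a b p) ^ 2 / 2))

lemma modeW_pos {σ L : ℝ} (Ω ε a b : ℝ) (hσ : 0 < σ) (hL : 0 < L) (p : ℕ × ℕ) :
    0 < modeW σ L Ω ε a b p := by
  have h1 := modeC_pos hσ hL ε p
  have h2 : 0 < Real.sqrt (2 * Real.pi * σ ^ 2) := by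
    have := Real.pi_pos
    positivity
  have h3 := Real.exp_pos (-σ ^ 2 * (modeU L Ω a b p) ^ 2 / 2)
  rw [modeW]
  positivity

lemma modeG_inner {σ L : ℝ} (Ω ε a b : ℝ) (hσ : 0 < σ) (hL : 0 < L) (p : ℕ × ℕ) (τ : ℝ) :
    (∫ τ' : ℝ, modeG σ L Ω ε a b p τ τ')
      = ((modeW σ L Ω ε a b p : ℝ) : ℂ) * gfun σ (-(modeU L Ω a b p)) τ := by
  rw [show (fun τ' => modeG σ L Ω ε a b p τ τ')
    = fun τ' => ((modeC σ L ε p : ℝ) : ℂ) * gfun σ (-(modeU L Ω a b p)) τ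
        * gfun σ (modeU L Ω a b p) τ' from rfl]
  rw [integral_const_mul, gfun_integral hσ (modeU L Ω a b p), modeW]
  push_cast
  ring

lemma modeW_outer {σ : ℝ} (L Ω ε a b : ℝ) (hσ : 0 < σ) (p : ℕ × ℕ) :
    (∫ τ : ℝ, ((modeW σ L Ω ε a b p : ℝ) : ℂ) * gfun σ (-(modeU L Ω a b p)) τ)
      = ((modeW σ L Ω ε a b p * (Real.sqrt (2 * Real.pi * σ ^ 2)
          * Real.exp (-σ ^ 2 * (modeU L Ω a b p) ^ 2 / 2)) : ℝ) : ℂ) := by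
  rw [integral_const_mul, gfun_integral hσ (-(modeU L Ω a b p)), neg_sq]
  push_cast
  ring

lemma modeW_final {σ L : ℝ} (Ω ε a b : ℝ) (hσ : 0 < σ) (hL : 0 < L) (p : ℕ × ℕ) :
    modeW σ L Ω ε a b p * (Real.sqrt (2 * Real.pi * σ ^ 2)
        * Real.exp (-σ ^ 2 * (modeU L Ω a b p) ^ 2 / 2))
      = (4 * Real.sqrt Real.pi * σ / L ^ 2)
        * (modeE L ε p * Real.exp (-σ ^ 2 * (modeU L Ω a b p) ^ 2)) := by
  have hA2 : Real.sqrt (2 * Real.pi * σ ^ 2) * Real.sqrt (2 * Real.pi * σ ^ 2)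
      = 2 * Real.pi * σ ^ 2 := Real.mul_self_sqrt (by positivity)
  have hexp : Real.exp (-σ ^ 2 * (modeU L Ω a b p) ^ 2 / 2)
        * Real.exp (-σ ^ 2 * (modeU L Ω a b p) ^ 2 / 2)
      = Real.exp (-σ ^ 2 * (modeU L Ω a b p) ^ 2) := by
    rw [← Real.exp_add]
    congr 1
    ring
  have hcc := aux_const hσ hL
  calc modeW σ L Ω ε a b p * (Real.sqrt (2 * Real.pi * σ ^ 2)
        * Real.exp (-σ ^ 2 * (modeU L Ω a b p) ^ 2 / 2))
      = (2 / L ^ 2 * (Real.pi ^ (-(1 : ℝ) / 4) * σ ^ (-(1 : ℝ) / 2)) ^ 2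
          * (Real.sqrt (2 * Real.pi * σ ^ 2) * Real.sqrt (2 * Real.pi * σ ^ 2)))
        * (modeE L ε p * (Real.exp (-σ ^ 2 * (modeU L Ω a b p) ^ 2 / 2)
          * Real.exp (-σ ^ 2 * (modeU L Ω a b p) ^ 2 / 2))) := by
        rw [modeW, modeC]
        ring
    _ = (2 / L ^ 2 * (Real.pi ^ (-(1 : ℝ) / 4) * σ ^ (-(1 : ℝ) / 2)) ^ 2
          * (2 * Real.pi * σ ^ 2))
        * (modeE L ε p * Real.exp (-σ ^ 2 * (modeU L Ω a b p) ^ 2)) := by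
        rw [hA2, hexp]
    _ = (4 * Real.sqrt Real.pi * σ / L ^ 2)
        * (modeE L ε p * Real.exp (-σ ^ 2 * (modeU L Ω a b p) ^ 2)) := by
        rw [hcc]

lemma aux_F_eq (σ L β Ω : ℝ) (hσ : 0 < σ) (hL : 0 < L) {ε : ℝ} (hε : 0 < ε) :
    (∫ τ : ℝ, ∫ τ' : ℝ,
      ((Real.pi ^ (-(1 : ℝ) / 4) * σ ^ (-(1 : ℝ) / 2) * Real.exp (-τ ^ 2 / (2 * σ ^ 2))
          * (Real.pi ^ (-(1 : ℝ) / 4) * σ ^ (-(1 : ℝ) / 2)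
            * Real.exp (-τ' ^ 2 / (2 * σ ^ 2))) : ℝ) : ℂ)
        * Complex.exp (-Complex.I * Ω * ((τ : ℂ) - τ')) *
        (-1 / (2 * (L : ℂ) ^ 2
          * Complex.sin ((Real.pi : ℂ)
              * ((Real.exp β : ℂ) * ((τ : ℂ) - τ') - Complex.I * ε) / L)
          * Complex.sin ((Real.pi : ℂ)
              * ((Real.exp (-β) : ℂ) * ((τ : ℂ) - τ') - Complex.I * ε) / L))))
    = (((4 * Real.sqrt Real.pi * σ / L ^ 2) * ∑' p : ℕ × ℕ,
        modeE L ε p * Real.exp (-σ ^ 2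
          * (modeU L Ω (Real.exp β) (Real.exp (-β)) p) ^ 2) : ℝ) : ℂ) := by
  set a : ℝ := Real.exp β with ha_def
  set b : ℝ := Real.exp (-β) with hb_def
  have hA : 0 < Real.sqrt (2 * Real.pi * σ ^ 2) := by
    have := Real.pi_pos
    positivity
  have hsummc := aux_summable_modeC hσ hL hε
  have hsum1 : ∀ τ : ℝ, Summable fun p : ℕ × ℕ => ∫ τ' : ℝ, ‖modeG σ L Ω ε a b p τ τ'‖ := by
    intro τ
    refine Summable.congr ?_ (fun p => (modeG_norm_integral Ω ε a b hσ hL p τ).symm)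
    exact (hsummc.mul_right _).mul_right _
  have houter_norm : ∀ p : ℕ × ℕ,
      (∫ τ : ℝ, ‖((modeW σ L Ω ε a b p : ℝ) : ℂ) * gfun σ (-(modeU L Ω a b p)) τ‖)
        = modeW σ L Ω ε a b p * Real.sqrt (2 * Real.pi * σ ^ 2) := by
    intro p
    have hpt : ∀ τ : ℝ, ‖((modeW σ L Ω ε a b p : ℝ) : ℂ) * gfun σ (-(modeU L Ω a b p)) τ‖
        = modeW σ L Ω ε a b p * ‖gfun σ (-(modeU L Ω a b p)) τ‖ := by
      intro τ
      rw [norm_mul, Complex.norm_real, Real.norm_eq_abs,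
        _root_.abs_of_pos (modeW_pos Ω ε a b hσ hL p)]
    simp only [hpt]
    rw [integral_const_mul, gfun_integral_norm hσ]
  have hsum2 : Summable fun p : ℕ × ℕ =>
      ∫ τ : ℝ, ‖((modeW σ L Ω ε a b p : ℝ) : ℂ) * gfun σ (-(modeU L Ω a b p)) τ‖ := by
    refine Summable.congr ?_ (fun p => (houter_norm p).symm)
    refine Summable.of_nonneg_of_le (fun p => ?_) (fun p => ?_)
      ((hsummc.mul_right (Real.sqrt (2 * Real.pi * σ ^ 2))).mul_right
        (Real.sqrt (2 * Real.pi * σ ^ 2)))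
    · exact le_of_lt (mul_pos (modeW_pos Ω ε a b hσ hL p) hA)
    · have he : Real.exp (-σ ^ 2 * (modeU L Ω a b p) ^ 2 / 2) ≤ 1 := by
        refine Real.exp_le_one_iff.2 ?_
        have : (0:ℝ) ≤ σ ^ 2 * (modeU L Ω a b p) ^ 2 / 2 := by positivity
        linarith
      have hc := modeC_pos hσ hL ε p
      rw [modeW]
      nlinarith [mul_le_mul_of_nonneg_left he
        (le_of_lt (mul_pos (mul_pos hc hA) hA))]
  calc (∫ τ : ℝ, ∫ τ' : ℝ,
      ((Real.pi ^ (-(1 : ℝ) / 4) * σ ^ (-(1 : ℝ) / 2) * Real.exp (-τ ^ 2 / (2 * σ ^ 2))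
          * (Real.pi ^ (-(1 : ℝ) / 4) * σ ^ (-(1 : ℝ) / 2)
            * Real.exp (-τ' ^ 2 / (2 * σ ^ 2))) : ℝ) : ℂ)
        * Complex.exp (-Complex.I * Ω * ((τ : ℂ) - τ')) *
        (-1 / (2 * (L : ℂ) ^ 2
          * Complex.sin ((Real.pi : ℂ) * ((a : ℂ) * ((τ : ℂ) - τ') - Complex.I * ε) / L)
          * Complex.sin ((Real.pi : ℂ) * ((b : ℂ) * ((τ : ℂ) - τ') - Complex.I * ε) / L))))
      = ∫ τ : ℝ, ∫ τ' : ℝ, ∑' p : ℕ × ℕ, modeG σ L Ω ε a b p τ τ' := by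
        refine integral_congr_ae (Filter.Eventually.of_forall fun τ => ?_)
        exact integral_congr_ae (Filter.Eventually.of_forall fun τ' =>
          aux_pointwise σ L Ω ε a b hσ hL hε τ τ')
    _ = ∫ τ : ℝ, ∑' p : ℕ × ℕ, ((modeW σ L Ω ε a b p : ℝ) : ℂ)
          * gfun σ (-(modeU L Ω a b p)) τ := by
        refine integral_congr_ae (Filter.Eventually.of_forall fun τ => ?_)
        dsimp only
        rw [← integral_tsum_of_summable_integral_norm
          (fun p => modeG_integrable L Ω ε a b hσ p τ) (hsum1 τ)]
        exact tsum_congr fun p => modeG_inner Ω ε a b hσ hL p τ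
    _ = ∑' p : ℕ × ℕ, ∫ τ : ℝ, ((modeW σ L Ω ε a b p : ℝ) : ℂ)
          * gfun σ (-(modeU L Ω a b p)) τ :=
        (integral_tsum_of_summable_integral_norm
          (fun p => (gfun_integrable hσ _).const_mul _) hsum2).symm
    _ = ∑' p : ℕ × ℕ, (((4 * Real.sqrt Real.pi * σ / L ^ 2)
          * (modeE L ε p * Real.exp (-σ ^ 2 * (modeU L Ω a b p) ^ 2)) : ℝ) : ℂ) := by
        refine tsum_congr fun p => ?_
        rw [modeW_outer L Ω ε a b hσ p, modeW_final Ω ε a b hσ hL p]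
    _ = (((4 * Real.sqrt Real.pi * σ / L ^ 2) * ∑' p : ℕ × ℕ,
          modeE L ε p * Real.exp (-σ ^ 2 * (modeU L Ω a b p) ^ 2) : ℝ) : ℂ) := by
        rw [← Complex.ofReal_tsum, tsum_mul_left]

/-- Response of a Gaussian-switched inertial detector (rapidity `β`) coupled to the scalar
density of the massless twisted Dirac field on the flat static cylinder of circumference `L`:
the `ε → 0⁺` limit of the double integral of the switching factors, the phase
`e^{−iΩ(τ−τ')}`, and the twisted correlation kernel equals
`(4√π σ/L²) Σ_{n,m≥0} exp[−σ²(Ω + (2π/L)((n+½)e^β + (m+½)e^{−β}))²]`,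
and that series converges. -/
theorem twisted_inertial_response (σ L β Ω : ℝ) (hσ : 0 < σ) (hL : 0 < L)
    (χ : ℝ → ℝ)
    (hχ : ∀ τ, χ τ = Real.pi ^ (-(1 : ℝ) / 4) * σ ^ (-(1 : ℝ) / 2) *
      Real.exp (-τ ^ 2 / (2 * σ ^ 2))) :
    Summable (fun p : ℕ × ℕ => Real.exp (-σ ^ 2 *
        (Ω + (2 * Real.pi / L) * (((p.1 : ℝ) + 1 / 2) * Real.exp β
          + ((p.2 : ℝ) + 1 / 2) * Real.exp (-β))) ^ 2))
    ∧ Tendsto (fun ε : ℝ =>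
        ∫ τ : ℝ, ∫ τ' : ℝ,
          ((χ τ * χ τ' : ℝ) : ℂ) * Complex.exp (-Complex.I * Ω * ((τ : ℂ) - τ')) *
            (-1 / (2 * (L : ℂ) ^ 2
              * Complex.sin ((Real.pi : ℂ) *
                  ((Real.exp β : ℂ) * ((τ : ℂ) - τ') - Complex.I * ε) / L)
              * Complex.sin ((Real.pi : ℂ) *
                  ((Real.exp (-β) : ℂ) * ((τ : ℂ) - τ') - Complex.I * ε) / L))))
      (𝓝[>] 0)
      (𝓝 (((4 * Real.sqrt Real.pi * σ / L ^ 2) *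
        ∑' p : ℕ × ℕ, Real.exp (-σ ^ 2 *
          (Ω + (2 * Real.pi / L) * (((p.1 : ℝ) + 1 / 2) * Real.exp β
            + ((p.2 : ℝ) + 1 / 2) * Real.exp (-β))) ^ 2) : ℝ) : ℂ)) := by
  have ha : 0 < Real.exp β := Real.exp_pos β
  have hb : 0 < Real.exp (-β) := Real.exp_pos (-β)
  have hπ := Real.pi_pos
  have hd : 0 < (2 * Real.pi / L) * min (Real.exp β) (Real.exp (-β)) :=
    mul_pos (by positivity) (lt_min ha hb)
  -- summability of the limiting series
  have hS : Summable (fun p : ℕ × ℕ => Real.exp (-σ ^ 2 *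
      (Ω + (2 * Real.pi / L) * (((p.1 : ℝ) + 1 / 2) * Real.exp β
        + ((p.2 : ℝ) + 1 / 2) * Real.exp (-β))) ^ 2)) := by
    refine aux_summable_S (Ω := Ω) hσ hd
      (fun p => Ω + (2 * Real.pi / L) * (((p.1 : ℝ) + 1 / 2) * Real.exp β
        + ((p.2 : ℝ) + 1 / 2) * Real.exp (-β))) (fun p => ?_)
    have habs : -Ω ≤ |Ω| := neg_le_abs Ω
    have hma : min (Real.exp β) (Real.exp (-β)) ≤ Real.exp β := min_le_left _ _
    have hmb : min (Real.exp β) (Real.exp (-β)) ≤ Real.exp (-β) := min_le_right _ _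
    have h2 : 0 < 2 * Real.pi / L := by positivity
    have hx : (0:ℝ) ≤ (p.1 : ℝ) := Nat.cast_nonneg _
    have hy : (0:ℝ) ≤ (p.2 : ℝ) := Nat.cast_nonneg _
    have t1 : 0 ≤ (2 * Real.pi / L) * (((p.1 : ℝ) + 1 / 2)
        * (Real.exp β - min (Real.exp β) (Real.exp (-β)))) :=
      mul_nonneg h2.le (mul_nonneg (by linarith) (by linarith))
    have t2 : 0 ≤ (2 * Real.pi / L) * (((p.2 : ℝ) + 1 / 2)
        * (Real.exp (-β) - min (Real.exp β) (Real.exp (-β)))) :=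
      mul_nonneg h2.le (mul_nonneg (by linarith) (by linarith))
    have hring : (2 * Real.pi / L) * (((p.1 : ℝ) + 1 / 2) * Real.exp β
        + ((p.2 : ℝ) + 1 / 2) * Real.exp (-β))
        = (2 * Real.pi / L) * min (Real.exp β) (Real.exp (-β)) * ((p.1 : ℝ) + (p.2 : ℝ) + 1)
          + ((2 * Real.pi / L) * (((p.1 : ℝ) + 1 / 2)
              * (Real.exp β - min (Real.exp β) (Real.exp (-β))))
            + (2 * Real.pi / L) * (((p.2 : ℝ) + 1 / 2)
              * (Real.exp (-β) - min (Real.exp β) (Real.exp (-β))))) := by ring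
    linarith
  refine ⟨hS, ?_⟩
  -- the limit of the mode sums
  have htend : Tendsto (fun ε : ℝ => (4 * Real.sqrt Real.pi * σ / L ^ 2) *
      ∑' p : ℕ × ℕ, Real.exp (-(2 * Real.pi * ε / L) * ((p.1 : ℝ) + (p.2 : ℝ) + 1))
        * Real.exp (-σ ^ 2 * (Ω + (2 * Real.pi / L) * (((p.1 : ℝ) + 1 / 2) * Real.exp β
          + ((p.2 : ℝ) + 1 / 2) * Real.exp (-β))) ^ 2)) (𝓝[>] 0)
      (𝓝 ((4 * Real.sqrt Real.pi * σ / L ^ 2) *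
        ∑' p : ℕ × ℕ, Real.exp (-σ ^ 2 *
          (Ω + (2 * Real.pi / L) * (((p.1 : ℝ) + 1 / 2) * Real.exp β
            + ((p.2 : ℝ) + 1 / 2) * Real.exp (-β))) ^ 2))) := by
    refine Tendsto.const_mul _ ?_
    refine tendsto_tsum_of_dominated_convergence hS ?_ ?_
    · intro p
      have hcont : Continuous fun ε : ℝ =>
          Real.exp (-(2 * Real.pi * ε / L) * ((p.1 : ℝ) + (p.2 : ℝ) + 1))
            * Real.exp (-σ ^ 2 * (Ω + (2 * Real.pi / L) * (((p.1 : ℝ) + 1 / 2) * Real.exp β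
              + ((p.2 : ℝ) + 1 / 2) * Real.exp (-β))) ^ 2) := by
        refine Continuous.mul ?_ continuous_const
        refine Real.continuous_exp.comp ?_
        continuity
      simpa using (hcont.tendsto 0).mono_left nhdsWithin_le_nhds
    · refine eventually_nhdsWithin_of_forall fun ε (hε : (0:ℝ) < ε) p => ?_
      have h1 : 0 < Real.exp (-(2 * Real.pi * ε / L) * ((p.1 : ℝ) + (p.2 : ℝ) + 1)) :=
        Real.exp_pos _
      have h2 : Real.exp (-(2 * Real.pi * ε / L) * ((p.1 : ℝ) + (p.2 : ℝ) + 1)) ≤ 1 := by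
        refine Real.exp_le_one_iff.2 ?_
        have hxy : (0:ℝ) ≤ (p.1 : ℝ) + (p.2 : ℝ) + 1 := by positivity
        have hq : (0:ℝ) ≤ 2 * Real.pi * ε / L := by positivity
        nlinarith
      have h3 : 0 ≤ Real.exp (-σ ^ 2 * (Ω + (2 * Real.pi / L)
          * (((p.1 : ℝ) + 1 / 2) * Real.exp β
            + ((p.2 : ℝ) + 1 / 2) * Real.exp (-β))) ^ 2) := Real.exp_nonneg _
      rw [Real.norm_eq_abs, _root_.abs_of_nonneg (mul_nonneg h1.le h3)]
      nlinarith
  have heqfun : ∀ ε : ℝ, 0 < ε →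
      (∫ τ : ℝ, ∫ τ' : ℝ,
        ((χ τ * χ τ' : ℝ) : ℂ) * Complex.exp (-Complex.I * Ω * ((τ : ℂ) - τ')) *
          (-1 / (2 * (L : ℂ) ^ 2
            * Complex.sin ((Real.pi : ℂ) *
                ((Real.exp β : ℂ) * ((τ : ℂ) - τ') - Complex.I * ε) / L)
            * Complex.sin ((Real.pi : ℂ) *
                ((Real.exp (-β) : ℂ) * ((τ : ℂ) - τ') - Complex.I * ε) / L))))
      = (((4 * Real.sqrt Real.pi * σ / L ^ 2) *
          ∑' p : ℕ × ℕ, Real.exp (-(2 * Real.pi * ε / L) * ((p.1 : ℝ) + (p.2 : ℝ) + 1))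
            * Real.exp (-σ ^ 2 * (Ω + (2 * Real.pi / L)
              * (((p.1 : ℝ) + 1 / 2) * Real.exp β
                + ((p.2 : ℝ) + 1 / 2) * Real.exp (-β))) ^ 2) : ℝ) : ℂ) := by
    intro ε hε
    simp only [hχ]
    rw [aux_F_eq σ L β Ω hσ hL hε]
    simp only [modeE, modeU]
  refine Filter.Tendsto.congr' ?_ ((Complex.continuous_ofReal.tendsto _).comp htend)
  filter_upwards [self_mem_nhdsWithin] with ε hε
  exact (heqfun ε hε).symm
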